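/- arXiv:2506.11636 — 6 statements merged into one kernel-verified Lean document; each statement's English description precedes it below -/
import Mathlib

section
/- Let K be a number field with ring of integers O_K, let a, b, c ∈ O_K be nonzero, and let v be a maximal ideal of O_K not dividing 2O_K, with completion K_v of K at v, valuation ring O_{K_v}, and uniformizer π of O_{K_v}. Suppose the multiplicities of v satisfy v(a) = v(b) > 0 and v(c) = 0, and write v(a) = 2v' + v'' with v' ≥ 0 an integer and v'' ∈ {0,1}. Then a·x² + b·y² + c·z² = 0 has a solution (x,y,z) ∈ O_{K_v}³ with x, y, z not all zero if and only if (a/π^{v(a)})·x² + (b/π^{v(a)})·y² + c·π^{v''}·z² = 0 has a solution (x,y,z) ∈ O_{K_v}³ with x, y, z not all zero. -/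
/-!
Put `n = v(a) = 2k + e` with `e ∈ {0, 1}`. If `a x² + b y² + c z² = 0` over `O_{K_v}`, then
`v(c z²) = 2 v(z) ≥ n`, hence `v(z) ≥ k + e` since `e ≤ 1`. So every zero has the form
`(x, y, π^{k+e} w)`, and `π⁻ⁿ (a x² + b y² + c π^{2k+2e} w²)` is exactly the second form evaluated
at `(x, y, w)`; scaling a form by `π⁻ⁿ` and substituting `z = π^{k+e} w` both preserve the
existence of a nontrivial zero.
-/

open NumberField IsDedekindDomain

open WithZero

section NontrivialZero

variable {F : Type*} [Field F]

def HasNontrivialZero (O : ValuationSubring F) (A B C : F) : Prop :=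
  ∃ x y z : O, ¬(x = 0 ∧ y = 0 ∧ z = 0) ∧
    A * (x : F) ^ 2 + B * (y : F) ^ 2 + C * (z : F) ^ 2 = 0

theorem hasNontrivialZero_mul_iff (O : ValuationSubring F) {A B C t : F} (ht : t ≠ 0) :
    HasNontrivialZero O (t * A) (t * B) (t * C) ↔ HasNontrivialZero O A B C := by
  refine exists₃_congr fun x y z => and_congr_right' ?_
  rw [show t * A * (x : F) ^ 2 + t * B * (y : F) ^ 2 + t * C * (z : F) ^ 2 =
      t * (A * (x : F) ^ 2 + B * (y : F) ^ 2 + C * (z : F) ^ 2) by ring, mul_eq_zero,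
    or_iff_right ht]

theorem hasNontrivialZero_mul_sq_iff (O : ValuationSubring F) {A B C : F} {t : O} (ht : t ≠ 0)
    (hdvd : ∀ x y z : O, A * (x : F) ^ 2 + B * (y : F) ^ 2 + C * (z : F) ^ 2 = 0 → t ∣ z) :
    HasNontrivialZero O A B (C * (t : F) ^ 2) ↔ HasNontrivialZero O A B C := by
  constructor
  · rintro ⟨x, y, w, hxyw, h⟩
    refine ⟨x, y, t * w, fun ⟨hx, hy, htw⟩ => hxyw ⟨hx, hy, ?_⟩, ?_⟩
    · exact (mul_eq_zero.mp htw).resolve_left ht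
    · push_cast
      linear_combination h
  · rintro ⟨x, y, z, hxyz, h⟩
    obtain ⟨w, rfl⟩ := hdvd x y z h
    refine ⟨x, y, w, fun ⟨hx, hy, hw⟩ => hxyz ⟨hx, hy, by rw [hw, mul_zero]⟩, ?_⟩
    push_cast at h
    linear_combination h

end NontrivialZero

theorem WithZero.le_exp_of_sq_le_exp {γ : ℤᵐ⁰} {n k e : ℕ} (hn : n = 2 * k + e) (he : e ≤ 1)
    (h : γ ^ 2 ≤ exp (-(n : ℤ))) : γ ≤ exp (-(k + e : ℤ)) := by
  rcases eq_or_ne γ 0 with rfl | hγ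
  · exact zero_le
  rw [← exp_log hγ, ← exp_nsmul, exp_le_exp, nsmul_eq_mul] at h
  rw [← exp_log hγ, exp_le_exp]
  omega

section Valuation

variable {F : Type*} [Field F] (val : Valuation F ℤᵐ⁰) {π : val.valuationSubring}
  {n k e : ℕ}

theorem pow_dvd_of_mul_sq_add_mul_sq_add_mul_sq_eq_zero (hπ : val π = exp (-1))
    (hn : n = 2 * k + e) (he : e ≤ 1) {A B C : F} (hA : val A ≤ exp (-(n : ℤ)))
    (hB : val B ≤ exp (-(n : ℤ))) (hC : val C = 1) (x y z : val.valuationSubring)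
    (h : A * (x : F) ^ 2 + B * (y : F) ^ 2 + C * (z : F) ^ 2 = 0) : π ^ (k + e) ∣ z := by
  have hx : val (x : F) ≤ 1 := x.2
  have hy : val (y : F) ≤ 1 := y.2
  have hz : val (z : F) ^ 2 ≤ exp (-(n : ℤ)) := by
    rw [← one_mul (val (z : F) ^ 2), ← hC, ← map_pow, ← map_mul,
      eq_neg_of_add_eq_zero_right h, Valuation.map_neg]
    refine (val.map_add _ _).trans (max_le ?_ ?_) <;> rw [map_mul, map_pow]
    · exact mul_le_of_le_of_le_one hA (pow_le_one' hx 2)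
    · exact mul_le_of_le_of_le_one hB (pow_le_one' hy 2)
  refine (Valuation.valuationSubring.integers val).dvd_of_le ?_
  rw [map_pow, ValuationSubring.algebraMap_apply, ValuationSubring.algebraMap_apply, map_pow, hπ,
    ← exp_nsmul]
  simpa using WithZero.le_exp_of_sq_le_exp hn he hz

theorem hasNontrivialZero_div_pow_iff (hπ : val π = exp (-1)) (hn : n = 2 * k + e)
    (he : e ≤ 1) {A B C : F} (hA : val A ≤ exp (-(n : ℤ))) (hB : val B ≤ exp (-(n : ℤ)))
    (hC : val C = 1) :
    HasNontrivialZero val.valuationSubring A B C ↔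
      HasNontrivialZero val.valuationSubring (A / (π : F) ^ n) (B / (π : F) ^ n)
        (C * (π : F) ^ e) := by
  have hπ0 : (π : F) ≠ 0 := by
    rintro h
    rw [h, map_zero] at hπ
    exact exp_ne_zero hπ.symm
  have hscale : C * (π : F) ^ e =
      ((π : F) ^ n)⁻¹ * (C * ((π ^ (k + e) : val.valuationSubring) : F) ^ 2) := by
    push_cast
    field_simp
    rw [hn]
    ring
  rw [div_eq_inv_mul, div_eq_inv_mul, hscale,
    hasNontrivialZero_mul_iff _ (inv_ne_zero (pow_ne_zero _ hπ0)),
    hasNontrivialZero_mul_sq_iff _ (pow_ne_zero _ fun h => hπ0 (by simp [h]))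
      (pow_dvd_of_mul_sq_add_mul_sq_add_mul_sq_eq_zero val hπ hn he hA hB hC)]

end Valuation

section AdicCompletion

variable {R K : Type*} [CommRing R] [IsDedekindDomain R] [Field K] [Algebra R K]
  [IsFractionRing R K] (v : HeightOneSpectrum R) (r : R)

theorem valuedAdicCompletion_algebraMap_le_exp_iff (n : ℕ) :
    Valued.v (algebraMap K (v.adicCompletion K) (algebraMap R K r)) ≤ exp (-(n : ℤ)) ↔
      r ∈ v.asIdeal ^ n := by
  rw [← v.intValuation_le_pow_iff_mem, ← v.valuation_of_algebraMap (K := K),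
    ← v.valuedAdicCompletion_eq_valuation']
  rfl

theorem valuedAdicCompletion_algebraMap_eq_one_iff :
    Valued.v (algebraMap K (v.adicCompletion K) (algebraMap R K r)) = 1 ↔ r ∉ v.asIdeal := by
  rw [← HeightOneSpectrum.intValuation_eq_one_iff, ← v.valuation_of_algebraMap (K := K),
    ← v.valuedAdicCompletion_eq_valuation']
  rfl

end AdicCompletion

theorem stmt_4_general (K : Type*) [Field K] [NumberField K] (a b c : 𝓞 K)
    (v : HeightOneSpectrum (𝓞 K))
    (na nb nc : ℕ)
    (hna : a ∈ v.asIdeal ^ na ∧ a ∉ v.asIdeal ^ (na + 1))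
    (hnb : b ∈ v.asIdeal ^ nb ∧ b ∉ v.asIdeal ^ (nb + 1))
    (hnc : c ∈ v.asIdeal ^ nc ∧ c ∉ v.asIdeal ^ (nc + 1))
    (hab : na = nb) (hczero : nc = 0)
    (v' v'' : ℕ) (hv'' : v'' = 0 ∨ v'' = 1) (hsplit : na = 2 * v' + v'')
    (π : v.adicCompletionIntegers K)
    (hπ : Valued.v (π : v.adicCompletion K) =
      ((Multiplicative.ofAdd (-1 : ℤ) : Multiplicative ℤ) : WithZero (Multiplicative ℤ))) :
    (∃ x y z : v.adicCompletionIntegers K, ¬(x = 0 ∧ y = 0 ∧ z = 0) ∧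
        (algebraMap K (v.adicCompletion K) (a : K)) * (x : v.adicCompletion K) ^ 2 +
          (algebraMap K (v.adicCompletion K) (b : K)) * (y : v.adicCompletion K) ^ 2 +
          (algebraMap K (v.adicCompletion K) (c : K)) * (z : v.adicCompletion K) ^ 2 = 0) ↔
    (∃ x y z : v.adicCompletionIntegers K, ¬(x = 0 ∧ y = 0 ∧ z = 0) ∧
        (algebraMap K (v.adicCompletion K) (a : K) / (π : v.adicCompletion K) ^ na) *
            (x : v.adicCompletion K) ^ 2 +
          (algebraMap K (v.adicCompletion K) (b : K) / (π : v.adicCompletion K) ^ na) *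
            (y : v.adicCompletion K) ^ 2 +
          (algebraMap K (v.adicCompletion K) (c : K) * (π : v.adicCompletion K) ^ v'') *
            (z : v.adicCompletion K) ^ 2 = 0) := by
  subst hab hczero
  have hA := (valuedAdicCompletion_algebraMap_le_exp_iff (K := K) v a na).2 hna.1
  have hB := (valuedAdicCompletion_algebraMap_le_exp_iff (K := K) v b na).2 hnb.1
  have hC := (valuedAdicCompletion_algebraMap_eq_one_iff (K := K) v c).2 (by simpa using hnc.2)
  exact hasNontrivialZero_div_pow_iff Valued.v hπ hsplit (by omega) hA hB hC

/-- Case (3) of the lemma on non-coprime coefficients: if `v(a) = v(b) > 0` and `v(c) = 0`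
for an odd finite place `v`, writing `v(a) = 2v' + v''` with `v'' ∈ {0,1}`, solvability of
`a·x² + b·y² + c·z² = 0` over the `v`-adic integers is equivalent to that of
`(a/π^{v(a)})·x² + (b/π^{v(a)})·y² + c·π^{v''}·z² = 0`. -/
theorem stmt_4 (K : Type*) [Field K] [NumberField K] (a b c : 𝓞 K)
    (ha : a ≠ 0) (hb : b ≠ 0) (hc : c ≠ 0)
    (v : HeightOneSpectrum (𝓞 K))
    (hodd : ¬ v.asIdeal ∣ Ideal.span {(2 : 𝓞 K)})
    (na nb nc : ℕ)
    (hna : a ∈ v.asIdeal ^ na ∧ a ∉ v.asIdeal ^ (na + 1))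
    (hnb : b ∈ v.asIdeal ^ nb ∧ b ∉ v.asIdeal ^ (nb + 1))
    (hnc : c ∈ v.asIdeal ^ nc ∧ c ∉ v.asIdeal ^ (nc + 1))
    (hab : na = nb) (hapos : 0 < na) (hczero : nc = 0)
    (v' v'' : ℕ) (hv'' : v'' = 0 ∨ v'' = 1) (hsplit : na = 2 * v' + v'')
    (π : v.adicCompletionIntegers K)
    (hπ : Valued.v (π : v.adicCompletion K) =
      ((Multiplicative.ofAdd (-1 : ℤ) : Multiplicative ℤ) : WithZero (Multiplicative ℤ))) :
    (∃ x y z : v.adicCompletionIntegers K, ¬(x = 0 ∧ y = 0 ∧ z = 0) ∧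
        (algebraMap K (v.adicCompletion K) (a : K)) * (x : v.adicCompletion K) ^ 2 +
          (algebraMap K (v.adicCompletion K) (b : K)) * (y : v.adicCompletion K) ^ 2 +
          (algebraMap K (v.adicCompletion K) (c : K)) * (z : v.adicCompletion K) ^ 2 = 0) ↔
    (∃ x y z : v.adicCompletionIntegers K, ¬(x = 0 ∧ y = 0 ∧ z = 0) ∧
        (algebraMap K (v.adicCompletion K) (a : K) / (π : v.adicCompletion K) ^ na) *
            (x : v.adicCompletion K) ^ 2 +
          (algebraMap K (v.adicCompletion K) (b : K) / (π : v.adicCompletion K) ^ na) *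
            (y : v.adicCompletion K) ^ 2 +
          (algebraMap K (v.adicCompletion K) (c : K) * (π : v.adicCompletion K) ^ v'') *
            (z : v.adicCompletion K) ^ 2 = 0) :=
  stmt_4_general K a b c v na nb nc hna hnb hnc hab hczero v' v'' hv'' hsplit π hπ
end

section
/- Let K be a number field with ring of integers O_K, let a, b, c ∈ O_K be nonzero, and let (α₀, β₀, γ₀) ∈ K³ be a solution of a·x² + b·y² + c·z² = 0 with γ₀ ≠ 0. Then every solution (x, y, z) ∈ K³ with z ≠ 0 is of the form x = ε₁·d·((b·m² − a·n²)·α₀ − 2·b·m·n·β₀), y = ε₂·d·(−2·a·m·n·α₀ + β₀·(a·n² − b·m²)), z = ε₃·d·γ₀·(a·n² + b·m²) for some m, n ∈ O_K, some nonzero d ∈ K, and some signs ε₁, ε₂, ε₃ ∈ {1, −1}. -/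
/-!
The line through the base point `(α₀, β₀, γ₀)` and a solution `(x, y, z)` meets the conic in a
second point; writing the slope of the line as `m / n` with `m, n ∈ 𝓞 K` and intersecting gives
`γ₀ (a n² + b m²) · (x, y, z) = z · P(m, n)`, where `P` is the parametrisation of the statement.
When the line is vertical (`x γ₀ = α₀ z`), the solution is `(α₀, ±β₀, γ₀)` up to scaling, which is
`P(1, 0)` after possibly changing the sign of `y`.
-/

open NumberField

section Conic

variable {F : Type*}

def conicParam [CommRing F] (a b α₀ β₀ γ₀ m n : F) : F × F × F :=
  ((b * m ^ 2 - a * n ^ 2) * α₀ - 2 * b * m * n * β₀,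
    -(2 * a * m * n * α₀) + β₀ * (a * n ^ 2 - b * m ^ 2),
    γ₀ * (a * n ^ 2 + b * m ^ 2))

/-- `hline` says that `m / n` is the slope of the line through `(α₀, β₀, γ₀)` and `(x, y, z)`;
given it, `hsecant` is the condition that `(x, y, z)` lies on the conic, with the factor
`x γ₀ - α₀ z` cancelled. -/
theorem smul_eq_smul_conicParam [CommRing F] {a b α₀ β₀ γ₀ x y z m n : F}
    (hline : m * (x * γ₀ - α₀ * z) = n * (y * γ₀ - β₀ * z))
    (hsecant : a * n * (x * γ₀ + α₀ * z) + b * m * (y * γ₀ + β₀ * z) = 0) :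
    (γ₀ * (a * n ^ 2 + b * m ^ 2)) • (x, y, z) = z • conicParam a b α₀ β₀ γ₀ m n := by
  simp only [conicParam, Prod.smul_mk, smul_eq_mul, Prod.mk.injEq]
  refine ⟨?_, ?_, by ring⟩
  · linear_combination n * hsecant + b * m * hline
  · linear_combination m * hsecant - a * n * hline

variable [Field F]

theorem conicParam_eq_zero_iff {a b c α₀ β₀ γ₀ m n : F} (h2 : (2 : F) ≠ 0) (ha : a ≠ 0)
    (hb : b ≠ 0) (hc : c ≠ 0) (hγ₀ : γ₀ ≠ 0) (h₀ : a * α₀ ^ 2 + b * β₀ ^ 2 + c * γ₀ ^ 2 = 0) :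
    conicParam a b α₀ β₀ γ₀ m n = 0 ↔ m = 0 ∧ n = 0 := by
  refine ⟨fun h ↦ ?_, fun ⟨hm, hn⟩ ↦ by simp [conicParam, hm, hn]⟩
  simp only [conicParam, Prod.mk_eq_zero, mul_eq_zero, hγ₀, false_or] at h
  obtain ⟨hX, -, hE⟩ := h
  by_cases hm : m = 0
  · subst hm
    exact ⟨rfl, by simpa [ha] using hE⟩
  exfalso
  -- On `a n² = -b m²`, the first coordinate factors as `2 b m (m α₀ - n β₀)`.
  have hslope : m * α₀ - n * β₀ = 0 := by
    have : 2 * b * m * (m * α₀ - n * β₀) = 0 := by linear_combination hX + α₀ * hE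
    simpa [h2, hb, hm] using this
  have hn : n = 0 := by
    have : c * (γ₀ * n) ^ 2 = 0 := by
      linear_combination n ^ 2 * h₀ - α₀ ^ 2 * hE + b * (m * α₀ + n * β₀) * hslope
    simpa [hc, hγ₀] using this
  subst hn
  simp [hb, hm] at hE

theorem exists_eq_smul_conicParam_of_secant {a b c α₀ β₀ γ₀ x y z m n : F} (h2 : (2 : F) ≠ 0)
    (ha : a ≠ 0) (hb : b ≠ 0) (hc : c ≠ 0) (hγ₀ : γ₀ ≠ 0)
    (h₀ : a * α₀ ^ 2 + b * β₀ ^ 2 + c * γ₀ ^ 2 = 0) (hz : z ≠ 0) (hmn : m ≠ 0 ∨ n ≠ 0)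
    (hline : m * (x * γ₀ - α₀ * z) = n * (y * γ₀ - β₀ * z))
    (hsecant : a * n * (x * γ₀ + α₀ * z) + b * m * (y * γ₀ + β₀ * z) = 0) :
    ∃ d : F, d ≠ 0 ∧ (x, y, z) = d • conicParam a b α₀ β₀ γ₀ m n := by
  have hsmul := smul_eq_smul_conicParam hline hsecant
  have hE : γ₀ * (a * n ^ 2 + b * m ^ 2) ≠ 0 := by
    intro hE
    rw [hE, zero_smul, eq_comm, smul_eq_zero_iff_right hz,
      conicParam_eq_zero_iff h2 ha hb hc hγ₀ h₀] at hsmul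
    tauto
  refine ⟨z / (γ₀ * (a * n ^ 2 + b * m ^ 2)), div_ne_zero hz hE, ?_⟩
  rw [div_eq_inv_mul, mul_smul, ← hsmul, inv_smul_smul₀ hE]

theorem exists_sign_of_vertical {a b c α₀ β₀ γ₀ x y z : F} (hb : b ≠ 0)
    (h₀ : a * α₀ ^ 2 + b * β₀ ^ 2 + c * γ₀ ^ 2 = 0) (hsol : a * x ^ 2 + b * y ^ 2 + c * z ^ 2 = 0)
    (hvert : x * γ₀ - α₀ * z = 0) :
    ∃ ε : F, (ε = 1 ∨ ε = -1) ∧ ε * y * γ₀ + β₀ * z = 0 := by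
  have h : b * (y * γ₀ - β₀ * z) * (y * γ₀ + β₀ * z) = 0 := by
    linear_combination γ₀ ^ 2 * hsol - z ^ 2 * h₀ - a * (x * γ₀ + α₀ * z) * hvert
  rcases mul_eq_zero.mp h with h | h
  · exact ⟨-1, Or.inr rfl, by linear_combination -(mul_eq_zero.mp h).resolve_left hb⟩
  · exact ⟨1, Or.inl rfl, by linear_combination h⟩

variable {R : Type*} [CommRing R] [Algebra R F] [IsFractionRing R F]

theorem exists_secant_slope {a b c α₀ β₀ γ₀ x y z : F}
    (h₀ : a * α₀ ^ 2 + b * β₀ ^ 2 + c * γ₀ ^ 2 = 0) (hsol : a * x ^ 2 + b * y ^ 2 + c * z ^ 2 = 0)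
    (hvert : x * γ₀ - α₀ * z ≠ 0) :
    ∃ m n : R, algebraMap R F n ≠ 0 ∧
      algebraMap R F m * (x * γ₀ - α₀ * z) = algebraMap R F n * (y * γ₀ - β₀ * z) ∧
      a * algebraMap R F n * (x * γ₀ + α₀ * z) + b * algebraMap R F m * (y * γ₀ + β₀ * z) = 0 := by
  obtain ⟨⟨m, n⟩, hmn⟩ :=
    IsLocalization.surj (nonZeroDivisors R) ((y * γ₀ - β₀ * z) / (x * γ₀ - α₀ * z))
  have hn : algebraMap R F n ≠ 0 := (IsLocalization.map_units F n).ne_zero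
  set m' := algebraMap R F m
  set n' := algebraMap R F (n : R)
  have hline : m' * (x * γ₀ - α₀ * z) = n' * (y * γ₀ - β₀ * z) := by
    rw [← hmn, div_mul_eq_mul_div, div_mul_cancel₀ _ hvert, mul_comm]
  refine ⟨m, n, hn, hline, ?_⟩
  have : (x * γ₀ - α₀ * z) * (a * n' * (x * γ₀ + α₀ * z) + b * m' * (y * γ₀ + β₀ * z)) = 0 := by
    linear_combination n' * γ₀ ^ 2 * hsol - n' * z ^ 2 * h₀ + b * (y * γ₀ + β₀ * z) * hline
  exact (mul_eq_zero.mp this).resolve_left hvert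

theorem exists_sign_eq_smul_conicParam {a b c α₀ β₀ γ₀ x y z : F} (h2 : (2 : F) ≠ 0)
    (ha : a ≠ 0) (hb : b ≠ 0) (hc : c ≠ 0) (hγ₀ : γ₀ ≠ 0)
    (h₀ : a * α₀ ^ 2 + b * β₀ ^ 2 + c * γ₀ ^ 2 = 0) (hz : z ≠ 0)
    (hsol : a * x ^ 2 + b * y ^ 2 + c * z ^ 2 = 0) :
    ∃ (m n : R) (d ε : F), d ≠ 0 ∧ (ε = 1 ∨ ε = -1) ∧
      (x, ε * y, z) = d • conicParam a b α₀ β₀ γ₀ (algebraMap R F m) (algebraMap R F n) := by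
  by_cases hvert : x * γ₀ - α₀ * z = 0
  · obtain ⟨ε, hε, hεy⟩ := exists_sign_of_vertical hb h₀ hsol hvert
    obtain ⟨d, hd, h⟩ := exists_eq_smul_conicParam_of_secant (x := x) (y := ε * y) (m := 1) (n := 0)
      h2 ha hb hc hγ₀ h₀ hz (Or.inl one_ne_zero) (by simp [hvert]) (by simp [hεy])
    exact ⟨1, 0, d, ε, hd, hε, by simpa using h⟩
  · obtain ⟨m, n, hn, hline, hsecant⟩ := exists_secant_slope (R := R) h₀ hsol hvert
    obtain ⟨d, hd, h⟩ := exists_eq_smul_conicParam_of_secant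
      h2 ha hb hc hγ₀ h₀ hz (Or.inr hn) hline hsecant
    exact ⟨m, n, d, 1, hd, Or.inl rfl, by simpa using h⟩

end Conic

/-- Every solution `(x,y,z) ∈ K³` with `z ≠ 0` of `a·x² + b·y² + c·z² = 0` over a number
field `K` arises from the parametric formulae built from a fixed solution `(α₀, β₀, γ₀)`
with `γ₀ ≠ 0`. -/
theorem stmt_6 (K : Type*) [Field K] [NumberField K] (a b c : 𝓞 K)
    (ha : a ≠ 0) (hb : b ≠ 0) (hc : c ≠ 0) (α₀ β₀ γ₀ : K) (hγ₀ : γ₀ ≠ 0)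
    (h₀ : (a : K) * α₀ ^ 2 + (b : K) * β₀ ^ 2 + (c : K) * γ₀ ^ 2 = 0)
    (x y z : K) (hz : z ≠ 0)
    (hsol : (a : K) * x ^ 2 + (b : K) * y ^ 2 + (c : K) * z ^ 2 = 0) :
    ∃ (m n : 𝓞 K) (d : K) (ε₁ ε₂ ε₃ : K), d ≠ 0 ∧
      (ε₁ = 1 ∨ ε₁ = -1) ∧ (ε₂ = 1 ∨ ε₂ = -1) ∧ (ε₃ = 1 ∨ ε₃ = -1) ∧
      x = ε₁ * (d * (((b : K) * (m : K) ^ 2 - (a : K) * (n : K) ^ 2) * α₀ -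
            2 * (b : K) * (m : K) * (n : K) * β₀)) ∧
      y = ε₂ * (d * (-(2 * (a : K) * (m : K) * (n : K) * α₀) +
            β₀ * ((a : K) * (n : K) ^ 2 - (b : K) * (m : K) ^ 2))) ∧
      z = ε₃ * (d * γ₀ * ((a : K) * (n : K) ^ 2 + (b : K) * (m : K) ^ 2)) := by
  obtain ⟨m, n, d, ε, hd, hε, h⟩ := exists_sign_eq_smul_conicParam (R := 𝓞 K) two_ne_zero
    (RingOfIntegers.coe_ne_zero_iff.mpr ha) (RingOfIntegers.coe_ne_zero_iff.mpr hb)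
    (RingOfIntegers.coe_ne_zero_iff.mpr hc) hγ₀ h₀ hz hsol
  simp only [conicParam, Prod.smul_mk, smul_eq_mul, Prod.mk.injEq] at h
  obtain ⟨hx, hy, hz⟩ := h
  have hεε : ε * ε = 1 := by rcases hε with rfl | rfl <;> norm_num
  refine ⟨m, n, d, 1, ε, 1, hd, Or.inl rfl, hε, Or.inl rfl, ?_, ?_, ?_⟩
  · rw [one_mul, hx]
  · linear_combination ε * hy - y * hεε
  · rw [one_mul, hz, mul_assoc]
end

section
/- Let K be a number field with ring of integers O_K, let a, b, c ∈ O_K be nonzero, and suppose a·x² + b·y² + c·z² = 0 has a solution (α₀, β₀, γ₀) ∈ K³ with γ₀ ≠ 0. Then the set of solutions (x, y, z) ∈ K³ of a·x² + b·y² + c·z² = 0 with z ≠ 0 is infinite. -/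
open NumberField

theorem diagonal_quadratic_mul {R : Type*} [CommRing R] (a b c t x y z : R) :
    a * (t * x) ^ 2 + b * (t * y) ^ 2 + c * (t * z) ^ 2 =
      t ^ 2 * (a * x ^ 2 + b * y ^ 2 + c * z ^ 2) := by
  ring

theorem infinite_setOf_diagonal_quadratic_eq_zero {K : Type*} [Field K] [Infinite K]
    (a b c α₀ β₀ γ₀ : K) (hγ₀ : γ₀ ≠ 0) (h₀ : a * α₀ ^ 2 + b * β₀ ^ 2 + c * γ₀ ^ 2 = 0) :
    {p : K × K × K | a * p.1 ^ 2 + b * p.2.1 ^ 2 + c * p.2.2 ^ 2 = 0 ∧ p.2.2 ≠ 0}.Infinite := by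
  let scale : K → K × K × K := fun t => (t * α₀, t * β₀, t * γ₀)
  have hscale_injective : Function.Injective scale := fun s t h =>
    mul_right_cancel₀ hγ₀ (congrArg (fun p : K × K × K => p.2.2) h)
  have hscale_mem : scale '' {0}ᶜ ⊆
      {p : K × K × K | a * p.1 ^ 2 + b * p.2.1 ^ 2 + c * p.2.2 ^ 2 = 0 ∧ p.2.2 ≠ 0} := by
    rintro _ ⟨t, ht, rfl⟩
    exact ⟨by rw [diagonal_quadratic_mul, h₀, mul_zero], mul_ne_zero ht hγ₀⟩
  exact ((Set.finite_singleton 0).infinite_compl.image hscale_injective.injOn).mono hscale_mem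

theorem stmt_7_general (K : Type*) [Field K] [NumberField K] (a b c : 𝓞 K)
    (α₀ β₀ γ₀ : K) (hγ₀ : γ₀ ≠ 0)
    (h₀ : (a : K) * α₀ ^ 2 + (b : K) * β₀ ^ 2 + (c : K) * γ₀ ^ 2 = 0) :
    {p : K × K × K |
      (a : K) * p.1 ^ 2 + (b : K) * p.2.1 ^ 2 + (c : K) * p.2.2 ^ 2 = 0 ∧
        p.2.2 ≠ 0}.Infinite :=
  infinite_setOf_diagonal_quadratic_eq_zero _ _ _ α₀ β₀ γ₀ hγ₀ h₀

/-- If `a·x² + b·y² + c·z² = 0` has a solution over a number field `K` with `z ≠ 0`, then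
it has infinitely many solutions with `z ≠ 0`. -/
theorem stmt_7 (K : Type*) [Field K] [NumberField K] (a b c : 𝓞 K)
    (ha : a ≠ 0) (hb : b ≠ 0) (hc : c ≠ 0) (α₀ β₀ γ₀ : K) (hγ₀ : γ₀ ≠ 0)
    (h₀ : (a : K) * α₀ ^ 2 + (b : K) * β₀ ^ 2 + (c : K) * γ₀ ^ 2 = 0) :
    {p : K × K × K |
      (a : K) * p.1 ^ 2 + (b : K) * p.2.1 ^ 2 + (c : K) * p.2.2 ^ 2 = 0 ∧
        p.2.2 ≠ 0}.Infinite :=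
  stmt_7_general K a b c α₀ β₀ γ₀ hγ₀ h₀
end

section
/- Let d ∈ {1, 2}, let K = ℚ(√−d) be the imaginary quadratic field generated by a square root of −d, with ring of integers O_K, and let |·| denote the complex absolute value under an embedding of K into ℂ. Let a, b, c ∈ O_K and suppose a·x² + b·y² + c·z² = 0 has a solution (α, β, γ) ∈ O_K³ with α, β, γ not all zero. Then it has a solution (α₀, β₀, γ₀) ∈ O_K³ with α₀, β₀, γ₀ not all zero and |γ₀| ≤ √( (4/(3−d))·|a·b| ). -/
/-!
For `d = 1, 2` the ring `𝓞 K` sits in `ℂ` with integral norms `|x|²` and covering radius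
`√μ`, `μ = (1 + d)/4 < 1`; the proof uses nothing else. After dividing out common factors, a
common factor `g` of `y` and `z` that is not a unit forces `g² ∣ a`, and we descend on `|a|`.
Otherwise `y` and `z` are coprime, and the vectors `(T, U)` with `T y ≡ U x (mod z)` form a
lattice of covolume `|z|`. Gauss reduction of the form `|a||T|² + |b||U|²` on it gives a nonzero
vector with `(1 - μ) (|a||T|² + |b||U|²)² ≤ |a||b||z|²`. Then `aT² + bU² = zZ`, and the second
intersection of the conic with the line through `(x : y : z)` and `(T : U : 0)`, scaled by `1/z`,
is an integral solution with last coordinate `Z`, where `|z||Z| ≤ |a||T|² + |b||U|²`.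
-/

open Complex ComplexConjugate

namespace Holzer

theorem lagrange_identity (A B : ℝ) (t₁ u₁ t₂ u₂ ζ : ℂ) :
    (A * normSq t₁ + B * normSq u₁) * (A * normSq (t₂ - ζ * t₁) + B * normSq (u₂ - ζ * u₁)) =
      normSq ((A * normSq t₁ + B * normSq u₁ : ℝ) * ζ -
          (A * (t₂ * conj t₁) + B * (u₂ * conj u₁))) +
        A * B * normSq (t₁ * u₂ - t₂ * u₁) := by
  simp only [normSq_apply, sub_re, sub_im, mul_re, mul_im, add_re, add_im, ofReal_re, ofReal_im,
    conj_re, conj_im]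
  ring

section TernaryForm

variable {R : Type*} [CommRing R]

def IsNontrivialZero (a b c x y z : R) : Prop :=
  ¬(x = 0 ∧ y = 0 ∧ z = 0) ∧ a * x ^ 2 + b * y ^ 2 + c * z ^ 2 = 0

theorem sq_dvd_of_isCoprime {a b c x y z g : R} (h : a * x ^ 2 + b * y ^ 2 + c * z ^ 2 = 0)
    (hgy : g ∣ y) (hgz : g ∣ z) (hxg : IsCoprime x g) : g ^ 2 ∣ a := by
  obtain ⟨y', rfl⟩ := hgy
  obtain ⟨z', rfl⟩ := hgz
  exact (hxg.symm.pow (m := 2) (n := 2)).dvd_of_dvd_mul_right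
    ⟨-(b * y' ^ 2 + c * z' ^ 2), by linear_combination h⟩

variable [IsDomain R]

theorem IsNontrivialZero.sq_mul_left {a b c x y z : R} {g : R} (hg : g ≠ 0)
    (h : IsNontrivialZero a b c x y z) : IsNontrivialZero (g ^ 2 * a) b c x (g * y) (g * z) := by
  refine ⟨fun ⟨hx, hy, hz⟩ ↦ h.1 ⟨hx, ?_, ?_⟩, by linear_combination g ^ 2 * h.2⟩
  · exact (mul_eq_zero.mp hy).resolve_left hg
  · exact (mul_eq_zero.mp hz).resolve_left hg

theorem exists_isNontrivialZero_mul_eq {a b c x y z T U : R} (hz : z ≠ 0) (hyz : IsCoprime y z)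
    (h : a * x ^ 2 + b * y ^ 2 + c * z ^ 2 = 0) (hTU : ¬(T = 0 ∧ U = 0))
    (hL : z ∣ T * y - U * x) :
    ∃ X Y Z, IsNontrivialZero a b c X Y Z ∧ z * Z = a * T ^ 2 + b * U ^ 2 := by
  -- `(X, Y, Z) = (m • (x, y, z) - 2e • (T, U, 0)) / z`; each division by `z` is exact because
  -- `y` is invertible modulo `z`.
  have hzy := hyz.symm
  obtain ⟨s, hs⟩ := hL
  obtain ⟨m, hm⟩ : z ∣ a * T ^ 2 + b * U ^ 2 := by
    refine (hzy.pow_right (n := 2)).dvd_of_dvd_mul_right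
      ⟨2 * a * U * x * s + a * z * s ^ 2 - c * U ^ 2 * z, ?_⟩
    linear_combination (a * (T * y + U * x + z * s)) * hs + U ^ 2 * h
  obtain ⟨e, he⟩ : z ∣ a * T * x + b * U * y := by
    refine hzy.dvd_of_dvd_mul_right ⟨a * x * s - c * U * z, ?_⟩
    linear_combination (a * x) * hs + U * h
  obtain ⟨Y, hY⟩ : z ∣ m * y - 2 * e * U := by
    refine hzy.dvd_of_dvd_mul_right ⟨a * s ^ 2 + c * U ^ 2, mul_left_cancel₀ hz ?_⟩
    linear_combination -y ^ 2 * hm + 2 * U * y * he + a * (T * y - U * x + z * s) * hs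
        - U ^ 2 * h
  obtain ⟨X, hX⟩ : z ∣ m * x - 2 * e * T := by
    refine hzy.dvd_of_dvd_mul_right ⟨2 * c * T * U - x * Y, mul_left_cancel₀ hz ?_⟩
    linear_combination -2 * x * y * hm + 2 * (T * y + U * x) * he - z * x * hY
        - 2 * T * U * h
  by_cases hm0 : m = 0
  · subst hm0
    exact ⟨T, U, 0, ⟨fun h ↦ hTU ⟨h.1, h.2.1⟩, by linear_combination hm⟩, by
      linear_combination -hm⟩
  · refine ⟨X, Y, m, ⟨fun h ↦ hm0 h.2.2, ?_⟩, hm.symm⟩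
    refine mul_left_cancel₀ (pow_ne_zero 2 hz) ?_
    linear_combination -a * (z * X + m * x - 2 * e * T) * hX
      - b * (z * Y + m * y - 2 * e * U) * hY + m ^ 2 * h - 4 * m * e * he + 4 * e ^ 2 * hm

end TernaryForm

variable {R : Type*} [CommRing R]

def hermForm (φ : R →+* ℂ) (A B : ℝ) (P : R × R) : ℝ :=
  A * normSq (φ P.1) + B * normSq (φ P.2)

theorem norm_map_add_le_hermForm (φ : R →+* ℂ) (a b : R) (P : R × R) :
    ‖φ (a * P.1 ^ 2 + b * P.2 ^ 2)‖ ≤ hermForm φ ‖φ a‖ ‖φ b‖ P := by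
  simp only [hermForm, map_add, map_mul, map_pow, normSq_eq_norm_sq]
  refine (norm_add_le _ _).trans_eq ?_
  simp only [norm_mul, norm_pow]

structure IsNormEuclidean (φ : R →+* ℂ) (μ : ℝ) : Prop where
  injective : Function.Injective φ
  exists_normSq_eq_natCast : ∀ x, ∃ n : ℕ, normSq (φ x) = n
  exists_normSq_sub_le : ∀ ζ : ℂ, ∃ v, normSq (ζ - φ v) ≤ μ
  lt_one : μ < 1

namespace IsNormEuclidean

variable {φ : R →+* ℂ} {μ : ℝ} {A B : ℝ}

theorem nonneg (hφ : IsNormEuclidean φ μ) : 0 ≤ μ := by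
  obtain ⟨v, hv⟩ := hφ.exists_normSq_sub_le 0
  exact (normSq_nonneg _).trans hv

theorem normSq_pos (hφ : IsNormEuclidean φ μ) {x : R} (hx : x ≠ 0) : 0 < normSq (φ x) :=
  Complex.normSq_pos.mpr ((map_ne_zero_iff φ hφ.injective).mpr hx)

theorem eq_zero_of_normSq_lt_one (hφ : IsNormEuclidean φ μ) {x : R} (hx : normSq (φ x) < 1) :
    x = 0 := by
  obtain ⟨n, hn⟩ := hφ.exists_normSq_eq_natCast x
  rw [hn, Nat.cast_lt_one] at hx
  rw [hx, Nat.cast_zero, normSq_eq_zero, map_eq_zero_iff _ hφ.injective] at hn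
  exact hn

theorem exists_normSq_sub_mul_le (hφ : IsNormEuclidean φ μ) (x : R) {y : R} (hy : y ≠ 0) :
    ∃ v, normSq (φ (x - v * y)) ≤ μ * normSq (φ y) := by
  have hy' : φ y ≠ 0 := (map_ne_zero_iff φ hφ.injective).mpr hy
  obtain ⟨v, hv⟩ := hφ.exists_normSq_sub_le (φ x / φ y)
  refine ⟨v, ?_⟩
  have : φ (x - v * y) = φ y * (φ x / φ y - φ v) := by
    rw [map_sub, map_mul]; field_simp
  rw [this, normSq_mul, mul_comm]
  exact mul_le_mul_of_nonneg_right hv (normSq_nonneg _)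

theorem one_lt_normSq (hφ : IsNormEuclidean φ μ) {g : R} (hg0 : g ≠ 0) (hg : ¬IsUnit g) :
    1 < normSq (φ g) := by
  by_contra! hle
  obtain ⟨v, hv⟩ := hφ.exists_normSq_sub_mul_le 1 hg0
  have hr : 1 - v * g = 0 := hφ.eq_zero_of_normSq_lt_one <|
    hv.trans_lt ((mul_le_of_le_one_right hφ.nonneg hle).trans_lt hφ.lt_one)
  exact hg (.of_mul_eq_one_right v (sub_eq_zero.mp hr).symm)

theorem exists_dvd_dvd_add_eq (hφ : IsNormEuclidean φ μ) (x y : R) :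
    ∃ g p q, g ∣ x ∧ g ∣ y ∧ p * x + q * y = g := by
  obtain ⟨n, hn⟩ := hφ.exists_normSq_eq_natCast y
  induction n using Nat.strong_induction_on generalizing x y with
  | _ n ih =>
  by_cases hy : y = 0
  · exact ⟨x, 1, 0, dvd_rfl, hy ▸ dvd_zero x, by ring⟩
  obtain ⟨v, hv⟩ := hφ.exists_normSq_sub_mul_le x hy
  obtain ⟨m, hm⟩ := hφ.exists_normSq_eq_natCast (x - v * y)
  have hmn : m < n := by
    have := hφ.normSq_pos hy
    exact_mod_cast hm ▸ hn ▸ hv.trans_lt (mul_lt_of_lt_one_left this hφ.lt_one)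
  obtain ⟨g, p, q, hgy, hgr, hpq⟩ := ih m hmn y (x - v * y) hm
  refine ⟨g, q, p - q * v, ?_, hgy, by rw [← hpq]; ring⟩
  simpa using dvd_add hgr (hgy.mul_left v)

theorem hermForm_pos (hφ : IsNormEuclidean φ μ) (hA : 0 < A) (hB : 0 < B) {P : R × R}
    (hP : P ≠ 0) : 0 < hermForm φ A B P := by
  unfold hermForm
  have h₁ := normSq_nonneg (φ P.1)
  have h₂ := normSq_nonneg (φ P.2)
  rcases ne_or_eq P.1 0 with hP₁ | hP₁
  · nlinarith [hφ.normSq_pos hP₁]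
  · have hP₂ : P.2 ≠ 0 := fun hP₂ ↦ hP (Prod.ext hP₁ hP₂)
    nlinarith [hφ.normSq_pos hP₂]

theorem isPWO_range_hermForm (hφ : IsNormEuclidean φ μ) (hA : 0 ≤ A) (hB : 0 ≤ B) :
    (Set.range (hermForm φ A B)).IsPWO := by
  have hmono : Monotone fun p : ℕ × ℕ ↦ A * p.1 + B * p.2 := fun p q hpq ↦ by
    have h₁ : (p.1 : ℝ) ≤ q.1 := by exact_mod_cast hpq.1
    have h₂ : (p.2 : ℝ) ≤ q.2 := by exact_mod_cast hpq.2
    dsimp only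
    gcongr
  refine ((Set.isPWO_of_wellQuasiOrderedLE Set.univ).image_of_monotone hmono).mono ?_
  rintro _ ⟨P, rfl⟩
  obtain ⟨n, hn⟩ := hφ.exists_normSq_eq_natCast P.1
  obtain ⟨m, hm⟩ := hφ.exists_normSq_eq_natCast P.2
  exact ⟨(n, m), trivial, by simp [hermForm, hn, hm]⟩

theorem exists_mul_hermForm_sub_smul_le (hφ : IsNormEuclidean φ μ) (P Q : R × R)
    (hP : 0 < hermForm φ A B P) :
    ∃ v : R, hermForm φ A B P * hermForm φ A B (Q - v • P) ≤
      μ * hermForm φ A B P ^ 2 + A * B * normSq (φ (P.1 * Q.2 - Q.1 * P.2)) := by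
  set H := hermForm φ A B P
  set S := A * (φ Q.1 * conj (φ P.1)) + B * (φ Q.2 * conj (φ P.2))
  obtain ⟨v, hv⟩ := hφ.exists_normSq_sub_le (S / H)
  refine ⟨v, ?_⟩
  have hround : normSq (H * φ v - S) ≤ μ * H ^ 2 := by
    have hH : (H : ℂ) ≠ 0 := by exact_mod_cast hP.ne'
    have : H * φ v - S = -H * (S / H - φ v) := by field_simp; ring
    rw [this, normSq_mul, normSq_neg, normSq_ofReal, mul_comm]
    nlinarith
  have hid : H * hermForm φ A B (Q - v • P) =
      normSq (H * φ v - S) + A * B * normSq (φ (P.1 * Q.2 - Q.1 * P.2)) := by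
    simp only [H, S, hermForm, Prod.fst_sub, Prod.snd_sub, Prod.smul_fst, Prod.smul_snd,
      smul_eq_mul, map_sub, map_mul]
    exact lagrange_identity A B (φ P.1) (φ P.2) (φ Q.1) (φ Q.2) (φ v)
  linarith

theorem exists_hermForm_sq_le (hφ : IsNormEuclidean φ μ) (hA : 0 < A) (hB : 0 < B)
    {x y z : R} (hz : z ≠ 0) (hyz : IsCoprime y z) :
    ∃ P : R × R, P ≠ 0 ∧ z ∣ P.1 * y - P.2 * x ∧
      (1 - μ) * hermForm φ A B P ^ 2 ≤ A * B * normSq (φ z) := by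
  -- A pair with `|det| = |z|` minimising the form on its first vector is Gauss-reduced.
  let bases : Set ((R × R) × (R × R)) := {PQ | z ∣ PQ.1.1 * y - PQ.1.2 * x ∧
    z ∣ PQ.2.1 * y - PQ.2.2 * x ∧
    normSq (φ (PQ.1.1 * PQ.2.2 - PQ.2.1 * PQ.1.2)) = normSq (φ z)}
  have hne : bases.Nonempty := by
    obtain ⟨p, q, hpq⟩ := hyz
    refine ⟨((x * p, 1), (z, 0)), ⟨-(x * q), by linear_combination x * hpq⟩, dvd_sub
      (dvd_mul_right z y) (by simp), by simp⟩
  obtain ⟨⟨P, Q⟩, ⟨hP, hQ, hdet⟩, hmin⟩ :=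
    ((hφ.isPWO_range_hermForm hA.le hB.le).mono (Set.range_comp_subset_range Prod.fst _)
      |>.mono (Set.image_subset_range _ bases)).exists_minimalFor _ bases hne
  have hP0 : P ≠ 0 := by
    rintro rfl
    simp only [Prod.fst_zero, Prod.snd_zero, zero_mul, mul_zero, sub_zero, map_zero] at hdet
    exact hz (normSq_eq_zero.mp hdet.symm |> (map_eq_zero_iff φ hφ.injective).mp)
  have hHpos := hφ.hermForm_pos hA hB hP0
  obtain ⟨v, hv⟩ := hφ.exists_mul_hermForm_sub_smul_le P Q hHpos
  have hswap : (Q - v • P, P) ∈ bases := by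
    refine ⟨?_, hP, ?_⟩
    · convert dvd_sub hQ (hP.mul_left v) using 1
      simp only [Prod.fst_sub, Prod.snd_sub, Prod.smul_fst, Prod.smul_snd, smul_eq_mul]
      ring
    · rw [← hdet, ← normSq_neg, ← map_neg]
      congr 2
      simp only [Prod.fst_sub, Prod.snd_sub, Prod.smul_fst, Prod.smul_snd, smul_eq_mul]
      ring
  have hle : hermForm φ A B P ≤ hermForm φ A B (Q - v • P) :=
    (le_total _ _).elim (hmin hswap) id
  have hred : hermForm φ A B P ^ 2 ≤ μ * hermForm φ A B P ^ 2 + A * B * normSq (φ z) :=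
    calc hermForm φ A B P ^ 2 ≤ hermForm φ A B P * hermForm φ A B (Q - v • P) := by
          rw [sq]; gcongr
      _ ≤ _ := hdet ▸ hv
  exact ⟨P, hP0, hP, by linarith⟩

variable [IsDomain R]

theorem exists_isNontrivialZero_normSq_le_of_isCoprime (hφ : IsNormEuclidean φ μ)
    {a b c x y z : R} (ha : a ≠ 0) (hb : b ≠ 0) (hz : z ≠ 0) (hyz : IsCoprime y z)
    (h : a * x ^ 2 + b * y ^ 2 + c * z ^ 2 = 0) :
    ∃ X Y Z, IsNontrivialZero a b c X Y Z ∧ (1 - μ) * normSq (φ Z) ≤ ‖φ a‖ * ‖φ b‖ := by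
  have hA : 0 < ‖φ a‖ := norm_pos_iff.mpr ((map_ne_zero_iff φ hφ.injective).mpr ha)
  have hB : 0 < ‖φ b‖ := norm_pos_iff.mpr ((map_ne_zero_iff φ hφ.injective).mpr hb)
  obtain ⟨P, hP0, hPL, hP⟩ := hφ.exists_hermForm_sq_le hA hB hz hyz
  obtain ⟨X, Y, Z, hXYZ, hzZ⟩ :=
    exists_isNontrivialZero_mul_eq hz hyz h (fun h ↦ hP0 (Prod.ext h.1 h.2)) hPL
  refine ⟨X, Y, Z, hXYZ, ?_⟩
  have hzZ_le : ‖φ z‖ * ‖φ Z‖ ≤ hermForm φ ‖φ a‖ ‖φ b‖ P := by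
    rw [← norm_mul, ← map_mul, hzZ]
    exact norm_map_add_le_hermForm φ a b P
  have hz' : 0 < ‖φ z‖ := norm_pos_iff.mpr ((map_ne_zero_iff φ hφ.injective).mpr hz)
  have hμ : 0 ≤ 1 - μ := sub_nonneg.mpr hφ.lt_one.le
  rw [normSq_eq_norm_sq] at hP ⊢
  refine le_of_mul_le_mul_right ?_ (pow_pos hz' 2)
  calc (1 - μ) * ‖φ Z‖ ^ 2 * ‖φ z‖ ^ 2 = (1 - μ) * (‖φ z‖ * ‖φ Z‖) ^ 2 := by ring
    _ ≤ (1 - μ) * hermForm φ ‖φ a‖ ‖φ b‖ P ^ 2 := by gcongr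
    _ ≤ ‖φ a‖ * ‖φ b‖ * ‖φ z‖ ^ 2 := hP

theorem exists_eq_mul_unimodular (hφ : IsNormEuclidean φ μ) (x y : R) {z : R}
    (hz : z ≠ 0) : ∃ e x' y' z' p q r, e ≠ 0 ∧ x = e * x' ∧ y = e * y' ∧ z = e * z' ∧
      p * x' + q * y' + r * z' = 1 := by
  obtain ⟨g, p₁, q₁, ⟨y', rfl⟩, ⟨z', rfl⟩, hg⟩ := hφ.exists_dvd_dvd_add_eq y z
  obtain ⟨e, p₂, q₂, ⟨x', rfl⟩, ⟨g', rfl⟩, he⟩ := hφ.exists_dvd_dvd_add_eq x g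
  have he0 : e ≠ 0 := by rintro rfl; simp at hz
  refine ⟨e, x', g' * y', g' * z', p₂, q₂ * p₁, q₂ * q₁, he0, rfl, by ring, by ring, ?_⟩
  refine mul_left_cancel₀ he0 ?_
  linear_combination he + q₂ * hg

theorem exists_isNontrivialZero_normSq_le (hφ : IsNormEuclidean φ μ) {a b c : R}
    (h : ∃ x y z, IsNontrivialZero a b c x y z) :
    ∃ x y z, IsNontrivialZero a b c x y z ∧ (1 - μ) * normSq (φ z) ≤ ‖φ a‖ * ‖φ b‖ := by
  obtain ⟨n, hn⟩ := hφ.exists_normSq_eq_natCast a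
  induction n using Nat.strong_induction_on generalizing a with
  | _ n ih =>
  obtain ⟨x, y, z, hxyz, h⟩ := h
  have hbound₀ : (1 - μ) * normSq (φ 0) ≤ ‖φ a‖ * ‖φ b‖ := by
    simp only [map_zero, mul_zero]
    positivity
  by_cases ha : a = 0
  · exact ⟨1, 0, 0, ⟨by simp, by simp [ha]⟩, hbound₀⟩
  by_cases hb : b = 0
  · exact ⟨0, 1, 0, ⟨by simp, by simp [hb]⟩, hbound₀⟩
  by_cases hz : z = 0
  · exact ⟨x, y, 0, ⟨fun h ↦ hxyz ⟨h.1, h.2.1, hz⟩, by simpa [hz] using h⟩, hbound₀⟩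
  obtain ⟨e, x₁, y₁, z₁, p, q, r, he, rfl, rfl, rfl, hpqr⟩ := hφ.exists_eq_mul_unimodular x y hz
  replace h : a * x₁ ^ 2 + b * y₁ ^ 2 + c * z₁ ^ 2 = 0 :=
    mul_left_cancel₀ (pow_ne_zero 2 he) (by linear_combination h)
  replace hz : z₁ ≠ 0 := right_ne_zero_of_mul hz
  obtain ⟨g, r₁, r₂, ⟨y₂, rfl⟩, ⟨z₂, rfl⟩, hg⟩ := hφ.exists_dvd_dvd_add_eq y₁ z₁
  by_cases hgu : IsUnit g
  · obtain ⟨u, hu⟩ := hgu.exists_left_inv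
    exact hφ.exists_isNontrivialZero_normSq_le_of_isCoprime ha hb hz
      ⟨u * r₁, u * r₂, by linear_combination u * hg + hu⟩ h
  have hg0 : g ≠ 0 := left_ne_zero_of_mul hz
  obtain ⟨a', rfl⟩ := sq_dvd_of_isCoprime h (dvd_mul_right g y₂) (dvd_mul_right g z₂)
    ⟨p, q * y₂ + r * z₂, by linear_combination hpqr⟩
  obtain ⟨m, hm⟩ := hφ.exists_normSq_eq_natCast a'
  have hmn : m < n := by
    have hg1 := hφ.one_lt_normSq hg0 hgu
    have ha' := hφ.normSq_pos (right_ne_zero_of_mul ha)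
    rw [map_mul, map_pow, normSq_mul, map_pow] at hn
    exact_mod_cast hm ▸ hn ▸ lt_mul_left ha' (one_lt_pow₀ hg1 two_ne_zero)
  obtain ⟨X, Y, Z, hXYZ, hbound⟩ :=
    ih m hmn ⟨g * x₁, g * y₂, g * z₂, fun h ↦ hz h.2.2, by linear_combination h⟩ hm
  refine ⟨X, g * Y, g * Z, hXYZ.sq_mul_left hg0, ?_⟩
  calc (1 - μ) * normSq (φ (g * Z)) = normSq (φ g) * ((1 - μ) * normSq (φ Z)) := by
        rw [map_mul, normSq_mul]; ring
    _ ≤ normSq (φ g) * (‖φ a'‖ * ‖φ b‖) := by gcongr; exact normSq_nonneg _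
    _ = ‖φ (g ^ 2 * a')‖ * ‖φ b‖ := by
        rw [map_mul, norm_mul, map_pow, norm_pow, ← normSq_eq_norm_sq]; ring

end IsNormEuclidean

section QuadraticField

open NumberField Module

variable {K : Type*} [Field K] {d : ℕ} {θ : K}

theorem finrank_le_two [NumberField K] (hθ : θ ^ 2 = -(d : K))
    (hgen : IntermediateField.adjoin ℚ {θ} = ⊤) : finrank ℚ K ≤ 2 := by
  have hroot : Polynomial.aeval θ (Polynomial.X ^ 2 + Polynomial.C (d : ℚ)) = 0 := by
    simp [hθ]
  have hne : (Polynomial.X ^ 2 + Polynomial.C (d : ℚ)) ≠ 0 :=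
    (Polynomial.monic_X_pow_add_C _ two_ne_zero).ne_zero
  rw [← IntermediateField.finrank_top', ← hgen,
    IntermediateField.adjoin.finrank (Algebra.IsIntegral.isIntegral θ)]
  calc (minpoly ℚ θ).natDegree
      ≤ (Polynomial.X ^ 2 + Polynomial.C (d : ℚ)).natDegree :=
        Polynomial.natDegree_le_natDegree (minpoly.degree_le_of_ne_zero ℚ θ hne hroot)
    _ = 2 := Polynomial.natDegree_X_pow_add_C

theorem re_apply_eq_zero_and_im_sq (hθ : θ ^ 2 = -(d : K)) (f : K →+* ℂ) :
    (f θ).re = 0 ∧ (f θ).im ^ 2 = d := by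
  have h : f θ ^ 2 = -(d : ℂ) := by rw [← map_pow, hθ, map_neg, map_natCast]
  have hre := congrArg re h
  have him := congrArg im h
  simp only [sq, mul_re, mul_im, neg_re, neg_im, natCast_re, natCast_im, neg_zero] at hre him
  have hd : (0 : ℝ) ≤ d := d.cast_nonneg
  have h0 : (f θ).re = 0 := by
    by_contra hne
    have : (f θ).im = 0 := by
      have : (f θ).re * (f θ).im = 0 := by linarith
      exact (mul_eq_zero.mp this).resolve_left hne
    have : (f θ).re * (f θ).re = -d := by rw [← hre, this]; ring
    exact hne (by nlinarith)
  refine ⟨h0, ?_⟩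
  rw [h0] at hre
  linarith

theorem not_isReal_of_sq_eq (hd : 0 < d) (hθ : θ ^ 2 = -(d : K)) (f : K →+* ℂ) :
    ¬ComplexEmbedding.IsReal f := by
  intro hf
  have h := congrArg im (RingHom.congr_fun (ComplexEmbedding.isReal_iff.mp hf) θ)
  simp only [ComplexEmbedding.conjugate_coe_eq, conj_im] at h
  have hd' : (0 : ℝ) < d := by exact_mod_cast hd
  nlinarith [(re_apply_eq_zero_and_im_sq hθ f).2]

theorem normSq_apply_eq_abs_norm [NumberField K] (hd : 0 < d) (hθ : θ ^ 2 = -(d : K))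
    (hgen : IntermediateField.adjoin ℚ {θ} = ⊤) (f : K →+* ℂ) (x : K) :
    normSq (f x) = |Algebra.norm ℚ x| := by
  classical
  have hf : (InfinitePlace.mk f).IsComplex :=
    InfinitePlace.isComplex_mk_iff.mpr (not_isReal_of_sq_eq hd hθ f)
  have hpos : 0 < InfinitePlace.nrComplexPlaces K := Fintype.card_pos_iff.mpr ⟨⟨_, hf⟩⟩
  have hrank := InfinitePlace.card_add_two_mul_card_eq_rank K
  have hle := finrank_le_two hθ hgen
  have : Subsingleton (InfinitePlace K) := Fintype.card_le_one_iff_subsingleton.mp <| by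
    rw [InfinitePlace.card_eq_nrRealPlaces_add_nrComplexPlaces]
    omega
  rw [← InfinitePlace.prod_eq_abs_norm, Fintype.prod_subsingleton _ (InfinitePlace.mk f),
    InfinitePlace.apply, InfinitePlace.mult,
    if_neg (InfinitePlace.not_isReal_iff_isComplex.mpr hf), normSq_eq_norm_sq]

theorem isIntegral_of_sq_eq (hθ : θ ^ 2 = -(d : K)) : IsIntegral ℤ θ :=
  .of_pow two_pos (hθ ▸ by simpa using (isIntegral_algebraMap (R := ℤ) (A := K) (x := -(d : ℤ))))

theorem exists_normSq_sub_apply_le [NumberField K] (hd : 0 < d) (hθ : θ ^ 2 = -(d : K))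
    (f : K →+* ℂ) (ζ : ℂ) : ∃ v : 𝓞 K, normSq (ζ - f v) ≤ (1 + d) / 4 := by
  obtain ⟨hre, him⟩ := re_apply_eq_zero_and_im_sq hθ f
  have ht : (f θ).im ≠ 0 := by
    intro h
    rw [h, sq, mul_zero] at him
    exact hd.ne' (by exact_mod_cast him.symm)
  obtain ⟨θ', hθ'⟩ : ∃ θ' : 𝓞 K, (θ' : K) = θ := ⟨⟨θ, isIntegral_of_sq_eq hθ⟩, rfl⟩
  set m := round ζ.re
  set n := round (ζ.im / (f θ).im)
  refine ⟨m + n * θ', ?_⟩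
  have hv : f ((m + n * θ' : 𝓞 K) : K) = m + n * f θ := by simp [hθ']
  have hre' := abs_sub_round ζ.re
  have him' := abs_sub_round (ζ.im / (f θ).im)
  have hsq : (ζ.im - n * (f θ).im) ^ 2 = d * (ζ.im / (f θ).im - n) ^ 2 := by
    rw [← him]; field_simp
  rw [hv, normSq_apply]
  simp only [sub_re, add_re, mul_re, intCast_re, intCast_im, sub_im, add_im, mul_im, hre]
  have h1 : (ζ.re - m) ^ 2 ≤ 1 / 4 := by nlinarith [abs_le.mp hre']
  have h2 : (ζ.im / (f θ).im - n) ^ 2 ≤ 1 / 4 := by nlinarith [abs_le.mp him']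
  have hd' : (0 : ℝ) ≤ d := d.cast_nonneg
  nlinarith

theorem isNormEuclidean_ringOfIntegers [NumberField K] (hd : 0 < d) (hd3 : d < 3)
    (hθ : θ ^ 2 = -(d : K)) (hgen : IntermediateField.adjoin ℚ {θ} = ⊤) (f : K →+* ℂ) :
    IsNormEuclidean (f.comp (algebraMap (𝓞 K) K)) ((1 + d) / 4) where
  injective := f.injective.comp RingOfIntegers.coe_injective
  exists_normSq_eq_natCast x := ⟨(Algebra.norm ℤ x).natAbs, by
    rw [RingHom.comp_apply, normSq_apply_eq_abs_norm hd hθ hgen, ← Algebra.coe_norm_int,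
      Nat.cast_natAbs]
    push_cast; rfl⟩
  exists_normSq_sub_le := exists_normSq_sub_apply_le hd hθ f
  lt_one := by
    have : (d : ℝ) < 3 := by exact_mod_cast hd3
    linarith

end QuadraticField

end Holzer

open NumberField

/-- Hölzer-type theorem of Díaz-Vargas and Vargas de los Santos for `K = ℚ(√-d)` with
`d = 1, 2`: a solvable equation `a·x² + b·y² + c·z² = 0` over `𝓞 K` has a non-trivial
solution `(α₀, β₀, γ₀)` with `|γ₀| ≤ √((4/(3-d))·|ab|)`. -/
theorem stmt_9 (d : ℕ) (hd : d = 1 ∨ d = 2)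
    (K : Type*) [Field K] [NumberField K]
    (θ : K) (hθ : θ ^ 2 = -(d : K)) (hgen : IntermediateField.adjoin ℚ {θ} = ⊤)
    (f : K →+* ℂ) (a b c : 𝓞 K)
    (h : ∃ α β γ : 𝓞 K, ¬(α = 0 ∧ β = 0 ∧ γ = 0) ∧
      a * α ^ 2 + b * β ^ 2 + c * γ ^ 2 = 0) :
    ∃ α₀ β₀ γ₀ : 𝓞 K, ¬(α₀ = 0 ∧ β₀ = 0 ∧ γ₀ = 0) ∧
      a * α₀ ^ 2 + b * β₀ ^ 2 + c * γ₀ ^ 2 = 0 ∧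
      ‖f (γ₀ : K)‖ ≤
        Real.sqrt ((4 / (3 - (d : ℝ))) * ‖f ((a : K) * (b : K))‖) := by
  have hd3 : (d : ℝ) < 3 := by rcases hd with rfl | rfl <;> norm_num
  obtain ⟨X, Y, Z, ⟨hXYZ, hsol⟩, hbound⟩ :=
    (Holzer.isNormEuclidean_ringOfIntegers (by omega) (by omega) hθ hgen f
      ).exists_isNontrivialZero_normSq_le h
  refine ⟨X, Y, Z, hXYZ, hsol, ?_⟩
  rw [Complex.norm_def, map_mul, norm_mul]
  refine Real.sqrt_le_sqrt ?_
  rw [div_mul_eq_mul_div, le_div_iff₀ (by linarith)]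
  simp only [RingHom.comp_apply] at hbound
  linarith
end

section
/- Let A, B, w, α₀, β₀ ∈ ℂ with B ≠ 0, |A| ≤ |B|, |w| < |B| − 1, and |α₀|² + |A|·|β₀|² ≤ |w|² + |A|. Then the element t = (α₀² − A·β₀²)/B satisfies |t| ≤ (|α₀|² + |A|·|β₀|²)/|B| and |t| < |B|. -/
/-! The numerator `α₀² − A·β₀²` has norm at most `|α₀|² + |A|·|β₀|²` by the triangle inequality,
which gives the first bound. For the second, `|w| < |B| − 1` and `|A| ≤ |B|` give
`|α₀|² + |A|·|β₀|² ≤ |w|² + |A| < (|B| − 1)² + |B| = |B|² − |B| + 1 < |B|²`, using `|B| > 1`. -/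

theorem norm_sq_sub_mul_sq_le {R : Type*} [SeminormedRing R] (a c b : R) :
    ‖a ^ 2 - c * b ^ 2‖ ≤ ‖a‖ ^ 2 + ‖c‖ * ‖b‖ ^ 2 :=
  calc ‖a ^ 2 - c * b ^ 2‖ ≤ ‖a ^ 2‖ + ‖c * b ^ 2‖ := norm_sub_le _ _
    _ ≤ ‖a‖ ^ 2 + ‖c‖ * ‖b‖ ^ 2 := by
      gcongr
      · exact norm_pow_le' a two_pos
      · exact (norm_mul_le c _).trans (by gcongr; exact norm_pow_le' b two_pos)

theorem lt_sq_of_le_sq_add_of_lt_sub_one {x a b s : ℝ} (hx : 0 ≤ x) (hab : a ≤ b)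
    (hxb : x < b - 1) (hs : s ≤ x ^ 2 + a) : s < b ^ 2 := by
  have hx2 : x ^ 2 < (b - 1) ^ 2 := pow_lt_pow_left₀ hxb hx two_ne_zero
  nlinarith

theorem stmt_16_general (A B w α₀ β₀ : ℂ)
    (hAB : ‖A‖ ≤ ‖B‖)
    (hw : ‖w‖ < ‖B‖ - 1)
    (hsmall : ‖α₀‖ ^ 2 + ‖A‖ * ‖β₀‖ ^ 2 ≤
      ‖w‖ ^ 2 + ‖A‖) :
    ‖(α₀ ^ 2 - A * β₀ ^ 2) / B‖ ≤
        (‖α₀‖ ^ 2 + ‖A‖ * ‖β₀‖ ^ 2) / ‖B‖ ∧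
      ‖(α₀ ^ 2 - A * β₀ ^ 2) / B‖ < ‖B‖ := by
  have hB : 0 < ‖B‖ := by linarith [norm_nonneg w]
  have hbound : ‖(α₀ ^ 2 - A * β₀ ^ 2) / B‖ ≤ (‖α₀‖ ^ 2 + ‖A‖ * ‖β₀‖ ^ 2) / ‖B‖ := by
    rw [norm_div]
    gcongr
    exact norm_sq_sub_mul_sq_le α₀ A β₀
  refine ⟨hbound, hbound.trans_lt ?_⟩
  rw [div_lt_iff₀ hB, ← sq]
  exact lt_sq_of_le_sq_add_of_lt_sub_one (norm_nonneg w) hAB hw hsmall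

/-- The size estimate in the descent step of Legendre's algorithm: under the stated bounds,
`t = (α₀² − A·β₀²)/B` satisfies `|t| ≤ (|α₀|² + |A|·|β₀|²)/|B|` and `|t| < |B|`. -/
theorem stmt_16 (A B w α₀ β₀ : ℂ) (hB : B ≠ 0)
    (hAB : ‖A‖ ≤ ‖B‖)
    (hw : ‖w‖ < ‖B‖ - 1)
    (hsmall : ‖α₀‖ ^ 2 + ‖A‖ * ‖β₀‖ ^ 2 ≤
      ‖w‖ ^ 2 + ‖A‖) :
    ‖(α₀ ^ 2 - A * β₀ ^ 2) / B‖ ≤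
        (‖α₀‖ ^ 2 + ‖A‖ * ‖β₀‖ ^ 2) / ‖B‖ ∧
      ‖(α₀ ^ 2 - A * β₀ ^ 2) / B‖ < ‖B‖ :=
  stmt_16_general A B w α₀ β₀ hAB hw hsmall
end

section
/- Let K be a field, let a, b, c ∈ K with c ≠ 0, and let α₀, β₀, γ₀ ∈ K satisfy a·α₀² + b·β₀² + c·γ₀² = 0. For arbitrary α, β, γ ∈ K, set Q = a·α² + b·β² + c·γ² and P = a·α₀·α + b·β₀·β + c·γ₀·γ, and define x = (α₀·Q − 2·α·P)/c, y = (β₀·Q − 2·β·P)/c, z = (γ₀·Q − 2·γ·P)/c. Then a·x² + b·y² + c·z² = 0. -/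
/-! Up to the factor `Q / c`, the point `(x, y, z)` is the reflection of `(α₀, β₀, γ₀)` in the
hyperplane orthogonal to `(α, β, γ)` with respect to the diagonal form `a x² + b y² + c z²`,
and reflections preserve the form. Clearing the denominator `Q` keeps the identity valid over
any commutative ring and for isotropic `(α, β, γ)`. -/

theorem LinearMap.BilinForm.apply_smul_sub_smul_self {R M : Type*} [CommRing R] [AddCommGroup M]
    [Module R M] (B : LinearMap.BilinForm R M) (hB : B.IsSymm) (u v : M) :
    B (B u u • v - (2 * B v u) • u) (B u u • v - (2 * B v u) • u) = B u u ^ 2 * B v v := by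
  have huv : B u v = B v u := (hB.eq v u).symm
  simp only [map_sub, map_smul, LinearMap.sub_apply, LinearMap.smul_apply, smul_eq_mul, huv]
  ring

theorem stmt_17_general (K : Type*) [Field K] (a b c : K) (α₀ β₀ γ₀ : K)
    (h₀ : a * α₀ ^ 2 + b * β₀ ^ 2 + c * γ₀ ^ 2 = 0) (α β γ : K) :
    a * ((α₀ * (a * α ^ 2 + b * β ^ 2 + c * γ ^ 2) -
          2 * α * (a * α₀ * α + b * β₀ * β + c * γ₀ * γ)) / c) ^ 2 +
      b * ((β₀ * (a * α ^ 2 + b * β ^ 2 + c * γ ^ 2) -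
          2 * β * (a * α₀ * α + b * β₀ * β + c * γ₀ * γ)) / c) ^ 2 +
      c * ((γ₀ * (a * α ^ 2 + b * β ^ 2 + c * γ ^ 2) -
          2 * γ * (a * α₀ * α + b * β₀ * β + c * γ₀ * γ)) / c) ^ 2 = 0 := by
  set B := Matrix.toBilin' (Matrix.diagonal ![a, b, c])
  have hB : B.IsSymm := Matrix.isSymm_toBilin'_iff_isSymm.mpr (Matrix.isSymm_diagonal _)
  have key := B.apply_smul_sub_smul_self hB ![α, β, γ] ![α₀, β₀, γ₀]
  simp only [B, Matrix.toBilin'_apply, Fin.sum_univ_three, Matrix.diagonal_apply_eq,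
    Matrix.diagonal_apply_ne, Matrix.cons_val_zero, Matrix.cons_val_one, Matrix.cons_val,
    Matrix.smul_cons, Matrix.sub_cons, Matrix.head_cons, Matrix.tail_cons, smul_eq_mul,
    Fin.isValue, ne_eq, Fin.reduceEq, not_false_eq_true, mul_zero, zero_mul, add_zero,
    zero_add] at key
  linear_combination (key + (a * α ^ 2 + b * β ^ 2 + c * γ ^ 2) ^ 2 * h₀) / c ^ 2

/-- Correctness of the reduction step in the solution-minimising algorithm: reflecting a
known solution `(α₀, β₀, γ₀)` of `a·x² + b·y² + c·z² = 0` through an arbitrary point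
`(α, β, γ)` yields another solution. -/
theorem stmt_17 (K : Type*) [Field K] (a b c : K) (hc : c ≠ 0) (α₀ β₀ γ₀ : K)
    (h₀ : a * α₀ ^ 2 + b * β₀ ^ 2 + c * γ₀ ^ 2 = 0) (α β γ : K) :
    a * ((α₀ * (a * α ^ 2 + b * β ^ 2 + c * γ ^ 2) -
          2 * α * (a * α₀ * α + b * β₀ * β + c * γ₀ * γ)) / c) ^ 2 +
      b * ((β₀ * (a * α ^ 2 + b * β ^ 2 + c * γ ^ 2) -
          2 * β * (a * α₀ * α + b * β₀ * β + c * γ₀ * γ)) / c) ^ 2 +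
      c * ((γ₀ * (a * α ^ 2 + b * β ^ 2 + c * γ ^ 2) -
          2 * γ * (a * α₀ * α + b * β₀ * β + c * γ₀ * γ)) / c) ^ 2 = 0 :=
  stmt_17_general K a b c α₀ β₀ γ₀ h₀ α β γ
end
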